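/- Let n ≥ 1, U ⊆ ℝⁿ open, J = diag(−1,1,…,1) the n×n matrix, λ ≠ 0 a fixed real number, and D_λ = (1/2)(λ I − λ⁻¹ J). Let A, F : U → M(n,ℝ) and set ω_j = e_j F − J Fᵗ e_j J. Suppose X : U → GL(n,ℝ) is differentiable, satisfies Xᵗ J X = J at every point (so X⁻¹ = J Xᵗ J), and satisfies the Riccati equation ∂_{x_j} X = X e_j Aᵗ D_λ X + X ω_j − D_λ J A J e_j for all j. Define F̃ = Xᵗ D_λ A + Fᵗ. Then X⁻¹ ∂_{x_j} X = e_j F̃ᵗ − J F̃ e_j J for all 1 ≤ j ≤ n. -/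

import Mathlib

/-!
Since `Xᵀ J X = J` and `J² = 1`, the inverse of `X` is `J Xᵀ J`. Multiplying the Riccati
equation on the left by it, the terms `X e_j Aᵀ D_λ X` and `X ω_j` lose their leading `X`, while
`D_λ J A J e_j` becomes `J Xᵀ D_λ A e_j J` because `D_λ` and `e_j` commute with `J`; the result is
`e_j F̃ᵗ − J F̃ e_j J` term by term.
-/

noncomputable section

open Matrix

variable {n : ℕ}

/-- entrywise partial derivative ∂_{x_j} of a matrix-valued function on ℝⁿ -/
def mpd (j : Fin n) (f : (Fin n → ℝ) → Matrix (Fin n) (Fin n) ℝ) (x : Fin n → ℝ) :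
    Matrix (Fin n) (Fin n) ℝ :=
  Matrix.of fun a b => fderiv ℝ (fun y => f y a b) x (Pi.single j 1)

/-- J = diag(−1,1,…,1) -/
def Jmat (n : ℕ) : Matrix (Fin n) (Fin n) ℝ :=
  Matrix.diagonal fun i => if (i : ℕ) = 0 then (-1 : ℝ) else 1

/-- e_j : the diagonal matrix with 1 in the j-th diagonal entry and 0 elsewhere -/
def eMat (j : Fin n) : Matrix (Fin n) (Fin n) ℝ :=
  Matrix.diagonal (Pi.single j 1)

/-- D_λ = (1/2)(λ I − λ⁻¹ J) -/
def Dlam (n : ℕ) (lam : ℝ) : Matrix (Fin n) (Fin n) ℝ :=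
  (1/2 : ℝ) • (lam • (1 : Matrix (Fin n) (Fin n) ℝ) - lam⁻¹ • Jmat n)

section Algebra

variable {m R : Type*} [Fintype m] [DecidableEq m] [CommRing R]

theorem Matrix.inv_eq_of_transpose_mul_mul_self_eq {J X : Matrix m m R} (hJ : J * J = 1)
    (hX : Xᵀ * J * X = J) : X⁻¹ = J * Xᵀ * J :=
  inv_eq_left_inv <| by simp only [mul_assoc] at hX ⊢; rw [hX, hJ]

theorem Matrix.inv_mul_riccati_eq {J D E X A F : Matrix m m R} (hJ : J * J = 1)
    (hJD : Commute J D) (hEJ : Commute E J) (hD : Dᵀ = D) (hX : Xᵀ * J * X = J) :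
    X⁻¹ * (X * E * Aᵀ * D * X + X * (E * F - J * Fᵀ * E * J) - D * J * A * J * E) =
      E * (Xᵀ * D * A + Fᵀ)ᵀ - J * (Xᵀ * D * A + Fᵀ) * E * J := by
  have hinv := inv_eq_of_transpose_mul_mul_self_eq hJ hX
  have hXX : X⁻¹ * X = 1 := by
    rw [hinv]; simp only [mul_assoc] at hX ⊢; rw [hX, hJ]
  have hJDJ : J * D * J = D := by rw [hJD.eq, mul_assoc, hJ, mul_one]
  calc X⁻¹ * (X * E * Aᵀ * D * X + X * (E * F - J * Fᵀ * E * J) - D * J * A * J * E)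
      = X⁻¹ * X * (E * Aᵀ * D * X + (E * F - J * Fᵀ * E * J))
          - J * Xᵀ * (J * D * J) * A * (J * E) := by rw [hinv]; noncomm_ring
    _ = E * Aᵀ * D * X + (E * F - J * Fᵀ * E * J) - J * Xᵀ * D * A * (E * J) := by
          rw [hXX, hJDJ, hEJ.eq, one_mul]
    _ = E * (Xᵀ * D * A + Fᵀ)ᵀ - J * (Xᵀ * D * A + Fᵀ) * E * J := by
          simp only [transpose_add, transpose_mul, transpose_transpose, hD]
          noncomm_ring

end Algebra

theorem Jmat_mul_self : Jmat n * Jmat n = 1 := by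
  rw [Jmat, diagonal_mul_diagonal, ← diagonal_one]
  congr 1
  funext i
  split_ifs <;> norm_num

theorem commute_Jmat_Dlam (lam : ℝ) : Commute (Jmat n) (Dlam n lam) := by
  unfold Dlam
  exact ((Commute.one_right _).smul_right lam |>.sub_right
    ((Commute.refl _).smul_right lam⁻¹)).smul_right _

theorem commute_eMat_Jmat (j : Fin n) : Commute (eMat j) (Jmat n) := by
  simp only [eMat, Jmat, commute_diagonal]

theorem transpose_Dlam (lam : ℝ) : (Dlam n lam)ᵀ = Dlam n lam := by
  simp [Dlam, Jmat]

theorem backlund_new_F_general (U : Set (Fin n → ℝ))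
    (lam : ℝ)
    (A F : (Fin n → ℝ) → Matrix (Fin n) (Fin n) ℝ)
    (ω : Fin n → (Fin n → ℝ) → Matrix (Fin n) (Fin n) ℝ)
    (hω : ∀ j x, ω j x = eMat j * F x - Jmat n * (F x)ᵀ * eMat j * Jmat n)
    (X : (Fin n → ℝ) → Matrix (Fin n) (Fin n) ℝ)
    (hXO : ∀ x ∈ U, (X x)ᵀ * Jmat n * X x = Jmat n)
    (hRiccati : ∀ x ∈ U, ∀ j : Fin n,
      mpd j X x = X x * eMat j * (A x)ᵀ * Dlam n lam * X x + X x * ω j x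
        - Dlam n lam * Jmat n * A x * Jmat n * eMat j)
    (Ftil : (Fin n → ℝ) → Matrix (Fin n) (Fin n) ℝ)
    (hFtil : ∀ x, Ftil x = (X x)ᵀ * Dlam n lam * A x + (F x)ᵀ) :
    ∀ x ∈ U, ∀ j : Fin n,
      (X x)⁻¹ * mpd j X x = eMat j * (Ftil x)ᵀ - Jmat n * Ftil x * eMat j * Jmat n := by
  intro x hx j
  rw [hRiccati x hx j, hω, hFtil]
  exact inv_mul_riccati_eq Jmat_mul_self (commute_Jmat_Dlam lam) (commute_eMat_Jmat j)
    (transpose_Dlam lam) (hXO x hx)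

theorem backlund_new_F (hn : 1 ≤ n) (U : Set (Fin n → ℝ)) (hU : IsOpen U)
    (lam : ℝ) (hlam : lam ≠ 0)
    (A F : (Fin n → ℝ) → Matrix (Fin n) (Fin n) ℝ)
    (ω : Fin n → (Fin n → ℝ) → Matrix (Fin n) (Fin n) ℝ)
    (hω : ∀ j x, ω j x = eMat j * F x - Jmat n * (F x)ᵀ * eMat j * Jmat n)
    (X : (Fin n → ℝ) → Matrix (Fin n) (Fin n) ℝ)
    (hXdiff : ∀ x ∈ U, ∀ a b : Fin n, DifferentiableAt ℝ (fun y => X y a b) x)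
    (hXinv : ∀ x ∈ U, IsUnit (X x))
    (hXO : ∀ x ∈ U, (X x)ᵀ * Jmat n * X x = Jmat n)
    (hRiccati : ∀ x ∈ U, ∀ j : Fin n,
      mpd j X x = X x * eMat j * (A x)ᵀ * Dlam n lam * X x + X x * ω j x
        - Dlam n lam * Jmat n * A x * Jmat n * eMat j)
    (Ftil : (Fin n → ℝ) → Matrix (Fin n) (Fin n) ℝ)
    (hFtil : ∀ x, Ftil x = (X x)ᵀ * Dlam n lam * A x + (F x)ᵀ) :
    ∀ x ∈ U, ∀ j : Fin n,
      (X x)⁻¹ * mpd j X x = eMat j * (Ftil x)ᵀ - Jmat n * Ftil x * eMat j * Jmat n :=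
  backlund_new_F_general U lam A F ω hω X hXO hRiccati Ftil hFtil

end
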